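/- Pivoting is an involution: if (u,v) is an edge of the undirected irreflexive graph G, then (G ∧ uv) ∧ uv = G, where in the second pivot the roles of u and v are interchanged appropriately (i.e., ((((G ⋆ u) ⋆ v) ⋆ u) ⋆ u) ⋆ v) ⋆ u = G). -/

import Mathlib

/-- Local complementation of `G` about `u`: edges between distinct neighbours of `u`
are complemented, all other adjacencies preserved. -/
def localComp {V : Type*} (G : SimpleGraph V) (u : V) : SimpleGraph V where
  Adj a b := (G.Adj a b ∧ ¬(G.Adj u a ∧ G.Adj u b ∧ a ≠ b)) ∨
             (¬ G.Adj a b ∧ (G.Adj u a ∧ G.Adj u b ∧ a ≠ b))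
  symm := by
    refine ⟨?_⟩
    intro a b h
    rcases h with ⟨h1, h2⟩ | ⟨h1, h2, h3, h4⟩
    · exact Or.inl ⟨h1.symm, fun ⟨x, y, z⟩ => h2 ⟨y, x, z.symm⟩⟩
    · exact Or.inr ⟨fun hc => h1 hc.symm, h3, h2, h4.symm⟩
  loopless := by
    refine ⟨?_⟩
    intro a h
    rcases h with ⟨h1, _⟩ | ⟨_, _, _, h4⟩
    · exact G.irrefl h1
    · exact h4 rfl


/-- Pivot of G about the edge (u,v). -/
def pivot {V : Type*} (G : SimpleGraph V) (u v : V) : SimpleGraph V :=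
  localComp (localComp (localComp G u) v) u

theorem localComp_adj {V : Type*} (G : SimpleGraph V) (u a b : V) :
    (localComp G u).Adj a b ↔
      (G.Adj a b ∧ ¬(G.Adj u a ∧ G.Adj u b ∧ a ≠ b)) ∨
        (¬ G.Adj a b ∧ (G.Adj u a ∧ G.Adj u b ∧ a ≠ b)) :=
  Iff.rfl

theorem localComp_adj_left_iff {V : Type*} (G : SimpleGraph V) (u a : V) :
    (localComp G u).Adj u a ↔ G.Adj u a := by
  have huu : ¬ G.Adj u u := G.irrefl
  simp only [localComp_adj]
  tauto

/-- The neighbourhood of `u` is unchanged by the first complementation, so the second one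
toggles exactly the same pairs back. -/
theorem localComp_localComp {V : Type*} (G : SimpleGraph V) (u : V) :
    localComp (localComp G u) u = G := by
  ext a b
  rw [localComp_adj, localComp_adj_left_iff, localComp_adj_left_iff, localComp_adj]
  tauto

theorem pivot_involution_general {V : Type*} (G : SimpleGraph V) (u v : V) :
    pivot (pivot G u v) u v = G := by
  simp only [pivot, localComp_localComp]

/-- Pivoting is an involution. -/
theorem pivot_involution {V : Type*} (G : SimpleGraph V) (u v : V) (huv : G.Adj u v) :
    pivot (pivot G u v) u v = G :=
  pivot_involution_general G u v
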